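/- For every positive integer s, the number of self-conjugate partitions that are simultaneously (2s)-core, (2s+1)-core, and (2s+2)-core equals the number of self-conjugate partitions that are simultaneously (2s+1)-core, (2s+2)-core, and (2s+3)-core. -/

import Mathlib

/-- A partition, given as a weakly decreasing sequence of natural numbers with
finite support.  `parts i` is the size of the `(i+1)`-st row (0-indexed). -/
structure YPartition where
  parts : ℕ → ℕ
  antitone : ∀ ⦃i j : ℕ⦄, i ≤ j → parts j ≤ parts i
  support_finite : ∃ N, ∀ i, N ≤ i → parts i = 0

namespace YPartition

/-- The conjugate partition: `conj p j` is the number of rows having more than `j`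
boxes, i.e. the length of the `(j+1)`-st column (0-indexed). -/
noncomputable def conj (p : YPartition) (j : ℕ) : ℕ :=
  Set.ncard {i : ℕ | j < p.parts i}

/-- `p.IsSelfConjugate` means the conjugate of `p` equals `p`. -/
def IsSelfConjugate (p : YPartition) : Prop :=
  ∀ j, p.conj j = p.parts j

/-- The hook length of the (0-indexed) box `(i, j)`; in 1-indexed terms this is
`λ_{i+1} + λ'_{j+1} - (i+1) - (j+1) + 1`. -/
noncomputable def hook (p : YPartition) (i j : ℕ) : ℕ :=
  p.parts i + p.conj j - i - j - 1

/-- `p.IsCore t` means no hook length of a box of `p` is divisible by `t`. -/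
def IsCore (p : YPartition) (t : ℕ) : Prop :=
  ∀ i j, j < p.parts i → ¬ (t ∣ p.hook i j)

/-- The set of main diagonal hook lengths of `p`. -/
noncomputable def MD (p : YPartition) : Set ℕ :=
  {h | ∃ i, i < p.parts i ∧ h = p.hook i i}

end YPartition


/- ===================== Part 1 : generalities ===================== -/

namespace YPartition

theorem ext' {p q : YPartition} (h : p.parts = q.parts) : p = q := by
  cases p; cases q; simpa using h

lemma exists_parts_le (p : YPartition) (j : ℕ) : ∃ i, p.parts i ≤ j := by
  obtain ⟨N, hN⟩ := p.support_finite
  exact ⟨N, by simp [hN N le_rfl]⟩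

noncomputable def cnj (p : YPartition) (j : ℕ) : ℕ := Nat.find (p.exists_parts_le j)

lemma parts_cnj_le (p : YPartition) (j : ℕ) : p.parts (p.cnj j) ≤ j := by
  simpa [cnj] using Nat.find_spec (p.exists_parts_le j)

lemma lt_parts_of_lt_cnj {p : YPartition} {i j : ℕ} (h : i < p.cnj j) : j < p.parts i := by
  have := Nat.find_min (p.exists_parts_le j) (by simpa [cnj] using h)
  omega

lemma conj_eq_cnj (p : YPartition) (j : ℕ) : p.conj j = p.cnj j := by
  have hset : {i : ℕ | j < p.parts i} = Set.Iio (p.cnj j) := by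
    ext i
    simp only [Set.mem_Iio, Set.mem_setOf_eq]
    constructor
    · intro hi
      by_contra hc
      push_neg at hc
      exact absurd (le_trans (p.antitone hc) (p.parts_cnj_le j)) (not_le.2 hi)
    · exact fun h => lt_parts_of_lt_cnj h
  rw [conj, hset, ← Finset.coe_range, Set.ncard_coe_finset, Finset.card_range]

lemma lt_conj_iff {p : YPartition} {i j : ℕ} : i < p.conj j ↔ j < p.parts i := by
  rw [conj_eq_cnj]
  constructor
  · exact lt_parts_of_lt_cnj
  · intro h
    by_contra hc
    push_neg at hc
    exact absurd (le_trans (p.antitone hc) (p.parts_cnj_le j)) (not_le.2 h)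

lemma conj_eq_of {p : YPartition} {j c : ℕ} (h1 : ∀ i < c, j < p.parts i)
    (h2 : p.parts c ≤ j) : p.conj j = c := by
  rw [conj_eq_cnj]
  have hle : p.cnj j ≤ c := by
    have : Nat.find (p.exists_parts_le j) ≤ c := Nat.find_le h2
    simpa [cnj] using this
  rcases lt_or_eq_of_le hle with hlt | heq
  · exact absurd (p.parts_cnj_le j) (not_le.2 (h1 _ hlt))
  · exact heq

end YPartition


/- ===================== Part 4 : configuration combinatorics ===================== -/

namespace SCCore

/-- The defining condition on the set of main diagonal hook lengths of a
self-conjugate `t`-core. -/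
def Phi (t : ℕ) (l : List ℕ) : Prop :=
  ∀ d ∈ l, (2*t < d → d - 2*t ∈ l) ∧ (d < 2*t → (2*t - d) ∉ l)

def psi0 (s d : ℕ) : ℕ := d + 2 * ((d + 2*s + 3) / (4*s + 4))
def chi0 (s e : ℕ) : ℕ := e - 2 * ((e + 2*s + 3) / (4*s + 6))

lemma psi0_mono (s : ℕ) {d d' : ℕ} (h : d ≤ d') : psi0 s d ≤ psi0 s d' := by
  have := Nat.div_le_div_right (c := 4*s+4) (by omega : d + 2*s + 3 ≤ d' + 2*s + 3)
  unfold psi0; omega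

lemma psi0_strictMono (s : ℕ) {d d' : ℕ} (h : d < d') : psi0 s d < psi0 s d' := by
  have := Nat.div_le_div_right (c := 4*s+4) (by omega : d + 2*s + 3 ≤ d' + 2*s + 3)
  unfold psi0; omega

lemma psi0_low (s : ℕ) {d : ℕ} (h : d ≤ 2*s) : psi0 s d = d := by
  have hdiv : (d + 2*s + 3) / (4*s + 4) = 0 := Nat.div_eq_of_lt (by omega)
  unfold psi0
  omega

lemma psi0_mid (s : ℕ) {d : ℕ} (h1 : 2*s+1 ≤ d) (h2 : d ≤ 6*s+3) : psi0 s d = d + 2 := by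
  have hdiv : (d + 2*s + 3) / (4*s + 4) = 1 := by
    refine Nat.div_eq_of_lt_le (by omega) (by omega)
  unfold psi0
  omega

lemma psi0_odd (s : ℕ) {d : ℕ} (h : d % 2 = 1) : psi0 s d % 2 = 1 := by
  unfold psi0; omega

/-- exact period shift -/
lemma psi0_period (s : ℕ) {d : ℕ} (h : 4*s+5 ≤ d) :
    psi0 s (d - (4*s+4)) + (4*s+6) = psi0 s d := by
  obtain ⟨x, rfl⟩ : ∃ x, d = x + (4*s+4) := ⟨d - (4*s+4), by omega⟩
  have h1 : (x + (4*s+4) + 2*s + 3) = (x + 2*s + 3) + 1*(4*s+4) := by ring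
  have h2 : (x + (4*s+4) + 2*s + 3) / (4*s+4) = (x + 2*s + 3)/(4*s+4) + 1 := by
    rw [h1, Nat.add_mul_div_right _ _ (by omega : 0 < 4*s+4)]
  have h3 : x + (4*s+4) - (4*s+4) = x := by omega
  unfold psi0
  rw [h3, h2]
  omega

/-- decomposition helper -/
lemma decomp (s x : ℕ) : ∃ k m, (x + 2*s + 3) / (4*s+4) = k ∧
    x + 2*s + 3 = (4*s+4)*k + m ∧ m < 4*s+4 :=
  ⟨_, _, rfl, (Nat.div_add_mod _ _).symm, Nat.mod_lt _ (by omega)⟩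

lemma chi0_psi0 (s d : ℕ) : chi0 s (psi0 s d) = d := by
  obtain ⟨k, m, hk, hx, hm⟩ := decomp s d
  unfold psi0 chi0
  rw [hk]
  have hexp1 : (k+1)*(4*s+6) = (4*s+4)*k + 2*k + 4*s + 6 := by ring
  have hexp2 : k*(4*s+6) = (4*s+4)*k + 2*k := by ring
  have hdiv : (d + 2*k + 2*s + 3) / (4*s+6) = k :=
    Nat.div_eq_of_lt_le (by omega) (by omega)
  rw [hdiv]
  omega

section Exclusions

variable {s : ℕ} {l : List ℕ}

/-- `2s+1 + (4s+4)k` never occurs. -/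
lemma X3 (h1 : Phi (2*s+1) l) (h2 : Phi (2*s+2) l) : ∀ k, (2*s+1) + (4*s+4)*k ∉ l := by
  intro k
  induction k with
  | zero =>
    intro hmem
    have hmem' : 2*s+1 ∈ l := by simpa using hmem
    have hthis := (h1 _ hmem').2 (by omega)
    have heq : 2*(2*s+1) - (2*s+1) = 2*s+1 := by omega
    rw [heq] at hthis
    exact hthis hmem'
  | succ k ih =>
    intro hmem
    have hexp : (4*s+4)*(k+1) = (4*s+4)*k + (4*s+4) := by ring
    have hthis := (h2 _ hmem).1 (by omega)
    have heq : 2*s+1 + (4*s+4)*(k+1) - 2*(2*s+2) = 2*s+1 + (4*s+4)*k := by omega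
    rw [heq] at hthis
    exact ih hthis

/-- `4s+3 + (4s+4)k` never occurs. -/
lemma X4 (h1 : Phi (2*s+1) l) (h2 : Phi (2*s+2) l) : ∀ k, (4*s+3) + (4*s+4)*k ∉ l := by
  intro k
  induction k with
  | zero =>
    intro hmem
    have hmem' : 4*s+3 ∈ l := by simpa using hmem
    have ha := (h1 _ hmem').1 (by omega)
    have hb := (h2 _ hmem').2 (by omega)
    have heqa : 4*s+3 - 2*(2*s+1) = 1 := by omega
    have heqb : 2*(2*s+2) - (4*s+3) = 1 := by omega
    rw [heqa] at ha; rw [heqb] at hb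
    exact hb ha
  | succ k ih =>
    intro hmem
    have hexp : (4*s+4)*(k+1) = (4*s+4)*k + (4*s+4) := by ring
    have hthis := (h2 _ hmem).1 (by omega)
    have heq : 4*s+3 + (4*s+4)*(k+1) - 2*(2*s+2) = 4*s+3 + (4*s+4)*k := by omega
    rw [heq] at hthis
    exact ih hthis

/-- `6s+1 + (4s+4)k` never occurs (needs the `2s`-condition too). -/
lemma X5 (h0 : Phi (2*s) l) (h1 : Phi (2*s+1) l) (h2 : Phi (2*s+2) l) :
    ∀ k, (6*s+1) + (4*s+4)*k ∉ l := by
  intro k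
  induction k with
  | zero =>
    intro hmem
    have hmem' : 6*s+1 ∈ l := by simpa using hmem
    have hthis := (h0 _ hmem').1 (by omega)
    have heq : 6*s+1 - 2*(2*s) = 2*s+1 := by omega
    rw [heq] at hthis
    exact X3 h1 h2 0 (by simpa using hthis)
  | succ k ih =>
    intro hmem
    have hexp : (4*s+4)*(k+1) = (4*s+4)*k + (4*s+4) := by ring
    have hthis := (h2 _ hmem).1 (by omega)
    have heq : 6*s+1 + (4*s+4)*(k+1) - 2*(2*s+2) = 6*s+1 + (4*s+4)*k := by omega
    rw [heq] at hthis
    exact ih hthis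

/-- `6s+3 + (4s+4)k` never occurs. -/
lemma X6 (h1 : Phi (2*s+1) l) (h2 : Phi (2*s+2) l) : ∀ k, (6*s+3) + (4*s+4)*k ∉ l := by
  intro k
  induction k with
  | zero =>
    intro hmem
    have hmem' : 6*s+3 ∈ l := by simpa using hmem
    have hthis := (h1 _ hmem').1 (by omega)
    have heq : 6*s+3 - 2*(2*s+1) = 2*s+1 := by omega
    rw [heq] at hthis
    exact X3 h1 h2 0 (by simpa using hthis)
  | succ k ih =>
    intro hmem
    have hexp : (4*s+4)*(k+1) = (4*s+4)*k + (4*s+4) := by ring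
    have hthis := (h2 _ hmem).1 (by omega)
    have heq : 6*s+3 + (4*s+4)*(k+1) - 2*(2*s+2) = 6*s+3 + (4*s+4)*k := by omega
    rw [heq] at hthis
    exact ih hthis

/-- shifted period identity for subtracting `4s+2`. -/
lemma psi0_I1 (h1 : Phi (2*s+1) l) (h2 : Phi (2*s+2) l) {d : ℕ} (hd : d ∈ l)
    (hodd : d % 2 = 1) (hbig : 4*s+3 ≤ d) :
    psi0 s (d - (4*s+2)) + (4*s+4) = psi0 s d := by
  obtain ⟨k, m, hk, hx, hm⟩ := decomp s d
  have hk1 : 1 ≤ k := by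
    rcases Nat.eq_zero_or_pos k with h | h
    · subst h; omega
    · exact h
  have hkk : (4*s+4)*k = (4*s+4)*(k-1) + (4*s+4) := by
    rcases Nat.exists_eq_add_of_le hk1 with ⟨j, hj⟩
    have hj' : k - 1 = j := by omega
    rw [hj', hj]; ring
  have hpar : (4*s+4)*k = 2*((2*s+2)*k) := by ring
  have hmodd : m % 2 = 0 := by omega
  have hmne : m ≠ 4*s+2 := by
    intro hmeq
    have heq : 6*s+3 + (4*s+4)*(k-1) = d := by omega
    exact X6 h1 h2 (k-1) (heq ▸ hd)
  have hmle : m ≤ 4*s+1 := by omega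
  have hsub : d - (4*s+2) + 2*s + 3 = (m+2) + (4*s+4)*(k-1) := by omega
  have hdiv2 : (d - (4*s+2) + 2*s + 3) / (4*s+4) = k - 1 := by
    rw [hsub, Nat.add_mul_div_left _ _ (by omega : 0 < 4*s+4),
        Nat.div_eq_of_lt (by omega)]
    omega
  unfold psi0
  rw [hk, hdiv2]
  omega

/-- shifted period identity for subtracting `4s` (needs the `2s` condition). -/
lemma psi0_I3 (h0 : Phi (2*s) l) (h1 : Phi (2*s+1) l) (h2 : Phi (2*s+2) l) {d : ℕ}
    (hd : d ∈ l) (hodd : d % 2 = 1) (hbig : 4*s+1 ≤ d) :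
    psi0 s (d - (4*s)) + (4*s+2) = psi0 s d := by
  obtain ⟨k, m, hk, hx, hm⟩ := decomp s d
  have hk1 : 1 ≤ k := by
    rcases Nat.eq_zero_or_pos k with h | h
    · subst h; omega
    · exact h
  have hkk : (4*s+4)*k = (4*s+4)*(k-1) + (4*s+4) := by
    rcases Nat.exists_eq_add_of_le hk1 with ⟨j, hj⟩
    have hj' : k - 1 = j := by omega
    rw [hj', hj]; ring
  have hpar : (4*s+4)*k = 2*((2*s+2)*k) := by ring
  have hmodd : m % 2 = 0 := by omega
  have hmne : m ≠ 4*s+2 := by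
    intro hmeq
    have heq : 6*s+3 + (4*s+4)*(k-1) = d := by omega
    exact X6 h1 h2 (k-1) (heq ▸ hd)
  have hmne' : m ≠ 4*s := by
    intro hmeq
    have heq : 6*s+1 + (4*s+4)*(k-1) = d := by omega
    exact X5 h0 h1 h2 (k-1) (heq ▸ hd)
  have hsub : d - (4*s) + 2*s + 3 = (m+4) + (4*s+4)*(k-1) := by omega
  have hdiv2 : (d - (4*s) + 2*s + 3) / (4*s+4) = k - 1 := by
    rw [hsub, Nat.add_mul_div_left _ _ (by omega : 0 < 4*s+4),
        Nat.div_eq_of_lt (by omega)]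
    omega
  unfold psi0
  rw [hk, hdiv2]
  omega

end Exclusions

section Transfer

variable {s : ℕ} {l : List ℕ}

lemma zoneA (h1 : Phi (2*s+1) l) (h2 : Phi (2*s+2) l) (hodd : ∀ d ∈ l, d % 2 = 1)
    {d : ℕ} (hd : d ∈ l) :
    d ≤ 2*s - 1 ∨ (2*s+3 ≤ d ∧ d ≤ 4*s+1) ∨ 4*s+5 ≤ d := by
  have ho := hodd d hd
  have hne1 : d ≠ 2*s+1 := fun h => X3 h1 h2 0 (by simpa [h] using hd)
  have hne2 : d ≠ 4*s+3 := fun h => X4 h1 h2 0 (by simpa [h] using hd)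
  omega

lemma psi0_big (hs : 1 ≤ s) {d : ℕ} (h : 4*s+5 ≤ d) : 4*s+7 ≤ psi0 s d := by
  have h1 := psi0_mono s h
  rw [psi0_mid s (by omega) (by omega)] at h1
  omega

lemma psi0_pos {d : ℕ} (h : 1 ≤ d) : 1 ≤ psi0 s d := by
  unfold psi0; omega

/-- Forward transfer for `Phi (2s+2)`. -/
lemma forward_t2 (hs : 1 ≤ s) (h1 : Phi (2*s+1) l) (h2 : Phi (2*s+2) l)
    (hodd : ∀ d ∈ l, d % 2 = 1) : Phi (2*s+2) (l.map (psi0 s)) := by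
  intro e he
  rw [List.mem_map] at he
  obtain ⟨d, hd, rfl⟩ := he
  constructor
  · intro hgt
    have hd43 : 4*s+3 ≤ d := by
      by_contra hc
      push_neg at hc
      rcases le_or_gt d (2*s) with hz | hz
      · rw [psi0_low s hz] at hgt; omega
      · rw [psi0_mid s hz (by omega)] at hgt; omega
    have hd45 : 4*s+5 ≤ d := by
      have := X4 h1 h2 0
      have hne : d ≠ 4*s+3 := fun h => this (by simpa [h] using hd)
      have := hodd d hd
      omega
    have hmem2 := (h1 d hd).1 (by omega)
    refine List.mem_map.2 ⟨d - (2*(2*s+1)), hmem2, ?_⟩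
    have hI := psi0_I1 h1 h2 hd (hodd d hd) (by omega)
    have h2s : d - 2*(2*s+1) = d - (4*s+2) := by omega
    rw [h2s]
    omega
  · intro hlt hmem
    rw [List.mem_map] at hmem
    obtain ⟨d', hd', heq⟩ := hmem
    have hsum : psi0 s d + psi0 s d' = 4*s+4 := by omega
    have hpos : 1 ≤ psi0 s d := psi0_pos (by have := hodd d hd; omega)
    have hpos' : 1 ≤ psi0 s d' := psi0_pos (by have := hodd d' hd'; omega)
    rcases zoneA h1 h2 hodd hd with hA | hB | hC
    · rcases zoneA h1 h2 hodd hd' with hA' | hB' | hC'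
      · rw [psi0_low s (by omega), psi0_low s (by omega)] at hsum
        have := (h2 d hd).2 (by omega)
        have hde : 2*(2*s+2) - d = d' := by omega
        rw [hde] at this
        exact this hd'
      · rw [psi0_low s (by omega), psi0_mid s (by omega) (by omega)] at hsum
        have := (h1 d hd).2 (by omega)
        have hde : 2*(2*s+1) - d = d' := by omega
        rw [hde] at this
        exact this hd'
      · have := psi0_big hs hC'; omega
    · rcases zoneA h1 h2 hodd hd' with hA' | hB' | hC'
      · rw [psi0_mid s (by omega) (by omega), psi0_low s (by omega)] at hsum
        have := (h1 d' hd').2 (by omega)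
        have hde : 2*(2*s+1) - d' = d := by omega
        rw [hde] at this
        exact this hd
      · rw [psi0_mid s (by omega) (by omega), psi0_mid s (by omega) (by omega)] at hsum
        omega
      · have := psi0_big hs hC'; omega
    · have := psi0_big hs hC; omega

/-- Forward transfer for `Phi (2s+3)`. -/
lemma forward_t3 (hs : 1 ≤ s) (h1 : Phi (2*s+1) l) (h2 : Phi (2*s+2) l)
    (hodd : ∀ d ∈ l, d % 2 = 1) : Phi (2*s+3) (l.map (psi0 s)) := by
  intro e he
  rw [List.mem_map] at he
  obtain ⟨d, hd, rfl⟩ := he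
  constructor
  · intro hgt
    have hd45 : 4*s+5 ≤ d := by
      by_contra hc
      push_neg at hc
      rcases le_or_gt d (2*s) with hz | hz
      · rw [psi0_low s hz] at hgt; omega
      · rw [psi0_mid s hz (by omega)] at hgt; omega
    have hmem2 := (h2 d hd).1 (by omega)
    refine List.mem_map.2 ⟨d - (2*(2*s+2)), hmem2, ?_⟩
    have hI := psi0_period s (by omega : 4*s+5 ≤ d)
    have h2s : d - 2*(2*s+2) = d - (4*s+4) := by omega
    rw [h2s]
    omega
  · intro hlt hmem
    rw [List.mem_map] at hmem
    obtain ⟨d', hd', heq⟩ := hmem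
    have hsum : psi0 s d + psi0 s d' = 4*s+6 := by omega
    have hpos : 1 ≤ psi0 s d := psi0_pos (by have := hodd d hd; omega)
    have hpos' : 1 ≤ psi0 s d' := psi0_pos (by have := hodd d' hd'; omega)
    rcases zoneA h1 h2 hodd hd with hA | hB | hC
    · rcases zoneA h1 h2 hodd hd' with hA' | hB' | hC'
      · rw [psi0_low s (by omega), psi0_low s (by omega)] at hsum
        have := hodd d hd; have := hodd d' hd'
        omega
      · rw [psi0_low s (by omega), psi0_mid s (by omega) (by omega)] at hsum
        have := (h2 d hd).2 (by omega)
        have hde : 2*(2*s+2) - d = d' := by omega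
        rw [hde] at this
        exact this hd'
      · have := psi0_big hs hC'; omega
    · rcases zoneA h1 h2 hodd hd' with hA' | hB' | hC'
      · rw [psi0_mid s (by omega) (by omega), psi0_low s (by omega)] at hsum
        have := (h2 d' hd').2 (by omega)
        have hde : 2*(2*s+2) - d' = d := by omega
        rw [hde] at this
        exact this hd
      · rw [psi0_mid s (by omega) (by omega), psi0_mid s (by omega) (by omega)] at hsum
        omega
      · have := psi0_big hs hC'; omega
    · have := psi0_big hs hC; omega

/-- Forward transfer for `Phi (2s+1)`. -/
lemma forward_t1 (hs : 1 ≤ s) (h0 : Phi (2*s) l) (h1 : Phi (2*s+1) l)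
    (h2 : Phi (2*s+2) l) (hodd : ∀ d ∈ l, d % 2 = 1) :
    Phi (2*s+1) (l.map (psi0 s)) := by
  intro e he
  rw [List.mem_map] at he
  obtain ⟨d, hd, rfl⟩ := he
  constructor
  · intro hgt
    have hd41 : 4*s+1 ≤ d := by
      by_contra hc
      push_neg at hc
      rcases le_or_gt d (2*s) with hz | hz
      · rw [psi0_low s hz] at hgt; omega
      · rw [psi0_mid s hz (by omega)] at hgt; omega
    have hmem2 := (h0 d hd).1 (by omega)
    refine List.mem_map.2 ⟨d - (2*(2*s)), hmem2, ?_⟩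
    have hI := psi0_I3 h0 h1 h2 hd (hodd d hd) (by omega)
    have h2s : d - 2*(2*s) = d - 4*s := by omega
    rw [h2s]
    omega
  · intro hlt hmem
    rw [List.mem_map] at hmem
    obtain ⟨d', hd', heq⟩ := hmem
    have hsum : psi0 s d + psi0 s d' = 4*s+2 := by omega
    have hpos : 1 ≤ psi0 s d := psi0_pos (by have := hodd d hd; omega)
    have hpos' : 1 ≤ psi0 s d' := psi0_pos (by have := hodd d' hd'; omega)
    rcases zoneA h1 h2 hodd hd with hA | hB | hC
    · rcases zoneA h1 h2 hodd hd' with hA' | hB' | hC'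
      · rw [psi0_low s (by omega), psi0_low s (by omega)] at hsum
        have := hodd d hd; have := hodd d' hd'
        omega
      · rw [psi0_low s (by omega), psi0_mid s (by omega) (by omega)] at hsum
        have := (h0 d hd).2 (by omega)
        have hde : 2*(2*s) - d = d' := by omega
        rw [hde] at this
        exact this hd'
      · have := psi0_big hs hC'; omega
    · rcases zoneA h1 h2 hodd hd' with hA' | hB' | hC'
      · rw [psi0_mid s (by omega) (by omega), psi0_low s (by omega)] at hsum
        have := (h0 d' hd').2 (by omega)
        have hde : 2*(2*s) - d' = d := by omega
        rw [hde] at this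
        exact this hd
      · rw [psi0_mid s (by omega) (by omega), psi0_mid s (by omega) (by omega)] at hsum
        omega
      · have := psi0_big hs hC'; omega
    · have := psi0_big hs hC; omega
end Transfer

section Reverse

variable {s : ℕ} {l : List ℕ}

lemma chi0_low (s : ℕ) {e : ℕ} (h : e ≤ 2*s+2) : chi0 s e = e := by
  have hdiv : (e + 2*s + 3) / (4*s + 6) = 0 := Nat.div_eq_of_lt (by omega)
  unfold chi0
  omega

lemma chi0_mid (s : ℕ) {e : ℕ} (h1 : 2*s+3 ≤ e) (h2 : e ≤ 6*s+7) : chi0 s e = e - 2 := by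
  have hdiv : (e + 2*s + 3) / (4*s + 6) = 1 :=
    Nat.div_eq_of_lt_le (by omega) (by omega)
  unfold chi0
  omega

/-- exact period shift for `chi0` -/
lemma chi0_period (s : ℕ) {e : ℕ} (h : 4*s+7 ≤ e) :
    chi0 s (e - (4*s+6)) + (4*s+4) = chi0 s e := by
  obtain ⟨x, rfl⟩ : ∃ x, e = x + (4*s+6) := ⟨e - (4*s+6), by omega⟩
  have h1 : (x + (4*s+6) + 2*s + 3) = (x + 2*s + 3) + 1*(4*s+6) := by ring
  have h2 : (x + (4*s+6) + 2*s + 3) / (4*s+6) = (x + 2*s + 3)/(4*s+6) + 1 := by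
    rw [h1, Nat.add_mul_div_right _ _ (by omega : 0 < 4*s+6)]
  have h3 : x + (4*s+6) - (4*s+6) = x := by omega
  have h4 : 2*((x + 2*s+3)/(4*s+6)) ≤ x + 2*s + 3 := by
    obtain ⟨k, m, hk, hx, hm⟩ : ∃ k m, (x + 2*s + 3) / (4*s+6) = k ∧
        x + 2*s + 3 = (4*s+6)*k + m ∧ m < 4*s+6 :=
      ⟨_, _, rfl, (Nat.div_add_mod _ _).symm, Nat.mod_lt _ (by omega)⟩
    have : (4*s+6)*k = 2*k + (4*s+4)*k := by ring
    omega
  have h6 : 2*((x + 2*s+3)/(4*s+6)) ≤ x := by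
    obtain ⟨k, m, hk, hx, hm⟩ : ∃ k m, (x + 2*s + 3) / (4*s+6) = k ∧
        x + 2*s + 3 = (4*s+6)*k + m ∧ m < 4*s+6 :=
      ⟨_, _, rfl, (Nat.div_add_mod _ _).symm, Nat.mod_lt _ (by omega)⟩
    rcases Nat.eq_zero_or_pos k with h | h
    · omega
    · have hkk : (4*s+6)*k = (4*s+6)*(k-1) + (4*s+6) := by
        rcases Nat.exists_eq_add_of_le h with ⟨j, hj⟩
        have hj' : k - 1 = j := by omega
        rw [hj', hj]; ring
      have : (4*s+6)*(k-1) = 2*(k-1) + (4*s+4)*(k-1) := by ring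
      omega
  unfold chi0
  rw [h3, h2]
  omega

/-- `2s+1 + (4s+6)k` never occurs in a B-configuration. -/
lemma Y1 (g1 : Phi (2*s+1) l) (g3 : Phi (2*s+3) l) : ∀ k, (2*s+1) + (4*s+6)*k ∉ l := by
  intro k
  induction k with
  | zero =>
    intro hmem
    have hmem' : 2*s+1 ∈ l := by simpa using hmem
    have hthis := (g1 _ hmem').2 (by omega)
    have heq : 2*(2*s+1) - (2*s+1) = 2*s+1 := by omega
    rw [heq] at hthis
    exact hthis hmem'
  | succ k ih =>
    intro hmem
    have hexp : (4*s+6)*(k+1) = (4*s+6)*k + (4*s+6) := by ring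
    have hthis := (g3 _ hmem).1 (by omega)
    have heq : 2*s+1 + (4*s+6)*(k+1) - 2*(2*s+3) = 2*s+1 + (4*s+6)*k := by omega
    rw [heq] at hthis
    exact ih hthis

/-- `2s+3 + (4s+6)k` never occurs in a B-configuration. -/
lemma Y2 (g3 : Phi (2*s+3) l) : ∀ k, (2*s+3) + (4*s+6)*k ∉ l := by
  intro k
  induction k with
  | zero =>
    intro hmem
    have hmem' : 2*s+3 ∈ l := by simpa using hmem
    have hthis := (g3 _ hmem').2 (by omega)
    have heq : 2*(2*s+3) - (2*s+3) = 2*s+3 := by omega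
    rw [heq] at hthis
    exact hthis hmem'
  | succ k ih =>
    intro hmem
    have hexp : (4*s+6)*(k+1) = (4*s+6)*k + (4*s+6) := by ring
    have hthis := (g3 _ hmem).1 (by omega)
    have heq : 2*s+3 + (4*s+6)*(k+1) - 2*(2*s+3) = 2*s+3 + (4*s+6)*k := by omega
    rw [heq] at hthis
    exact ih hthis

/-- `4s+3 + (4s+6)k` never occurs in a B-configuration. -/
lemma Y5 (g1 : Phi (2*s+1) l) (g2 : Phi (2*s+2) l) (g3 : Phi (2*s+3) l) :
    ∀ k, (4*s+3) + (4*s+6)*k ∉ l := by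
  intro k
  induction k with
  | zero =>
    intro hmem
    have hmem' : 4*s+3 ∈ l := by simpa using hmem
    have ha := (g1 _ hmem').1 (by omega)
    have hb := (g2 _ hmem').2 (by omega)
    have heqa : 4*s+3 - 2*(2*s+1) = 1 := by omega
    have heqb : 2*(2*s+2) - (4*s+3) = 1 := by omega
    rw [heqa] at ha; rw [heqb] at hb
    exact hb ha
  | succ k ih =>
    intro hmem
    have hexp : (4*s+6)*(k+1) = (4*s+6)*k + (4*s+6) := by ring
    have hthis := (g3 _ hmem).1 (by omega)
    have heq : 4*s+3 + (4*s+6)*(k+1) - 2*(2*s+3) = 4*s+3 + (4*s+6)*k := by omega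
    rw [heq] at hthis
    exact ih hthis

/-- `4s+5 + (4s+6)k` never occurs in a B-configuration. -/
lemma Y3 (g2 : Phi (2*s+2) l) (g3 : Phi (2*s+3) l) :
    ∀ k, (4*s+5) + (4*s+6)*k ∉ l := by
  intro k
  induction k with
  | zero =>
    intro hmem
    have hmem' : 4*s+5 ∈ l := by simpa using hmem
    have ha := (g2 _ hmem').1 (by omega)
    have hb := (g3 _ hmem').2 (by omega)
    have heqa : 4*s+5 - 2*(2*s+2) = 1 := by omega
    have heqb : 2*(2*s+3) - (4*s+5) = 1 := by omega
    rw [heqa] at ha; rw [heqb] at hb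
    exact hb ha
  | succ k ih =>
    intro hmem
    have hexp : (4*s+6)*(k+1) = (4*s+6)*k + (4*s+6) := by ring
    have hthis := (g3 _ hmem).1 (by omega)
    have heq : 4*s+5 + (4*s+6)*(k+1) - 2*(2*s+3) = 4*s+5 + (4*s+6)*k := by omega
    rw [heq] at hthis
    exact ih hthis

/-- `6s+5 + (4s+6)k` never occurs in a B-configuration. -/
lemma Y6 (g1 : Phi (2*s+1) l) (g3 : Phi (2*s+3) l) :
    ∀ k, (6*s+5) + (4*s+6)*k ∉ l := by
  intro k
  induction k with
  | zero =>
    intro hmem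
    have hmem' : 6*s+5 ∈ l := by simpa using hmem
    have hthis := (g1 _ hmem').1 (by omega)
    have heq : 6*s+5 - 2*(2*s+1) = 2*s+3 := by omega
    rw [heq] at hthis
    exact Y2 g3 0 (by simpa using hthis)
  | succ k ih =>
    intro hmem
    have hexp : (4*s+6)*(k+1) = (4*s+6)*k + (4*s+6) := by ring
    have hthis := (g3 _ hmem).1 (by omega)
    have heq : 6*s+5 + (4*s+6)*(k+1) - 2*(2*s+3) = 6*s+5 + (4*s+6)*k := by omega
    rw [heq] at hthis
    exact ih hthis

/-- `psi0 ∘ chi0 = id` on elements avoiding residue `2s+1 mod (4s+6)`. -/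
lemma psi0_chi0 (g1 : Phi (2*s+1) l) (g3 : Phi (2*s+3) l) {e : ℕ} (he : e ∈ l)
    (hodd : e % 2 = 1) : psi0 s (chi0 s e) = e := by
  obtain ⟨k, m, hk, hx, hm⟩ : ∃ k m, (e + 2*s + 3) / (4*s+6) = k ∧
      e + 2*s + 3 = (4*s+6)*k + m ∧ m < 4*s+6 :=
    ⟨_, _, rfl, (Nat.div_add_mod _ _).symm, Nat.mod_lt _ (by omega)⟩
  have hpar : (4*s+6)*k = 2*((2*s+3)*k) := by ring
  have hexp : (4*s+6)*k = (4*s+4)*k + 2*k := by ring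
  have hmodd : m % 2 = 0 := by omega
  have hmne : m ≠ 4*s+4 := by
    intro hmeq
    have heq : 2*s+1 + (4*s+6)*k = e := by omega
    exact Y1 g1 g3 k (heq ▸ he)
  have h2k : 2*k ≤ e := by
    rcases Nat.eq_zero_or_pos k with h | h
    · omega
    · have hkk : (4*s+6)*k = (4*s+6)*(k-1) + (4*s+6) := by
        rcases Nat.exists_eq_add_of_le h with ⟨j, hj⟩
        have hj' : k - 1 = j := by omega
        rw [hj', hj]; ring
      have : (4*s+6)*(k-1) = 2*(k-1) + (4*s+4)*(k-1) := by ring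
      omega
  have hchi : chi0 s e = e - 2*k := by unfold chi0; rw [hk]
  have hdiv : (e - 2*k + 2*s + 3) / (4*s+4) = k := by
    have hcomm : k*(4*s+4) = (4*s+4)*k := by ring
    have hcomm2 : (k+1)*(4*s+4) = (4*s+4)*k + 4*s+4 := by ring
    exact Nat.div_eq_of_lt_le (by omega) (by omega)
  rw [hchi]
  unfold psi0
  rw [hdiv]
  omega

lemma zoneB (g1 : Phi (2*s+1) l) (g2 : Phi (2*s+2) l) (g3 : Phi (2*s+3) l)
    (hodd : ∀ d ∈ l, d % 2 = 1) {e : ℕ} (he : e ∈ l) :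
    e ≤ 2*s - 1 ∨ (2*s+5 ≤ e ∧ e ≤ 4*s+1) ∨ 4*s+7 ≤ e := by
  have ho := hodd e he
  have hne1 : e ≠ 2*s+1 := fun h => Y1 g1 g3 0 (by simpa [h] using he)
  have hne2 : e ≠ 2*s+3 := fun h => Y2 g3 0 (by simpa [h] using he)
  have hne3 : e ≠ 4*s+3 := fun h => Y5 g1 g2 g3 0 (by simpa [h] using he)
  have hne4 : e ≠ 4*s+5 := fun h => Y3 g2 g3 0 (by simpa [h] using he)
  omega

/-- shifted period identity: subtracting `4s+4` from `e`. -/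
lemma chi0_J1 (g1 : Phi (2*s+1) l) (g3 : Phi (2*s+3) l) {e : ℕ} (he : e ∈ l)
    (hodd : e % 2 = 1) (hbig : 4*s+5 ≤ e) :
    chi0 s (e - (4*s+4)) + (4*s+2) = chi0 s e := by
  obtain ⟨k, m, hk, hx, hm⟩ : ∃ k m, (e + 2*s + 3) / (4*s+6) = k ∧
      e + 2*s + 3 = (4*s+6)*k + m ∧ m < 4*s+6 :=
    ⟨_, _, rfl, (Nat.div_add_mod _ _).symm, Nat.mod_lt _ (by omega)⟩
  have hpar : (4*s+6)*k = 2*((2*s+3)*k) := by ring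
  have hexp : (4*s+6)*k = (4*s+4)*k + 2*k := by ring
  have hmodd : m % 2 = 0 := by omega
  have hk1 : 1 ≤ k := by
    rcases Nat.eq_zero_or_pos k with h | h
    · subst h; omega
    · exact h
  obtain ⟨j, rfl⟩ : ∃ j, k = j + 1 := ⟨k - 1, by omega⟩
  have hA : (4*s+6)*(j+1) = (4*s+6)*j + (4*s+6) := by ring
  have hB : (4*s+6)*j = (4*s+4)*j + 2*j := by ring
  have hmne : m ≠ 4*s+4 := by
    intro hmeq
    have heq : 2*s+1 + (4*s+6)*(j+1) = e := by omega
    exact Y1 g1 g3 (j+1) (heq ▸ he)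
  have hE : j = 0 ∨ 4*s+4 ≤ (4*s+4)*j := by
    rcases j with _ | j0
    · left; rfl
    · right; exact Nat.le_mul_of_pos_right _ (by omega)
  have hsub : e - (4*s+4) + 2*s + 3 = (m+2) + (4*s+6)*j := by omega
  have hdiv2 : (e - (4*s+4) + 2*s + 3) / (4*s+6) = j := by
    rw [hsub, Nat.add_mul_div_left _ _ (by omega : 0 < 4*s+6),
        Nat.div_eq_of_lt (by omega)]
    omega
  unfold chi0
  rw [hk, hdiv2]
  omega

/-- shifted period identity: subtracting `4s+2` from `e`. -/
lemma chi0_J2 (g1 : Phi (2*s+1) l) (g3 : Phi (2*s+3) l) {e : ℕ} (he : e ∈ l)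
    (hodd : e % 2 = 1) (hbig : 4*s+3 ≤ e) :
    chi0 s (e - (4*s+2)) + (4*s) = chi0 s e := by
  obtain ⟨k, m, hk, hx, hm⟩ : ∃ k m, (e + 2*s + 3) / (4*s+6) = k ∧
      e + 2*s + 3 = (4*s+6)*k + m ∧ m < 4*s+6 :=
    ⟨_, _, rfl, (Nat.div_add_mod _ _).symm, Nat.mod_lt _ (by omega)⟩
  have hpar : (4*s+6)*k = 2*((2*s+3)*k) := by ring
  have hexp : (4*s+6)*k = (4*s+4)*k + 2*k := by ring
  have hmodd : m % 2 = 0 := by omega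
  have hk1 : 1 ≤ k := by
    rcases Nat.eq_zero_or_pos k with h | h
    · subst h; omega
    · exact h
  obtain ⟨j, rfl⟩ : ∃ j, k = j + 1 := ⟨k - 1, by omega⟩
  have hA : (4*s+6)*(j+1) = (4*s+6)*j + (4*s+6) := by ring
  have hB : (4*s+6)*j = (4*s+4)*j + 2*j := by ring
  have hmne : m ≠ 4*s+4 := by
    intro hmeq
    have heq : 2*s+1 + (4*s+6)*(j+1) = e := by omega
    exact Y1 g1 g3 (j+1) (heq ▸ he)
  have hmne' : m ≠ 4*s+2 := by
    intro hmeq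
    have heq : 6*s+5 + (4*s+6)*j = e := by omega
    exact Y6 g1 g3 j (heq ▸ he)
  have hE : j = 0 ∨ 4*s+4 ≤ (4*s+4)*j := by
    rcases j with _ | j0
    · left; rfl
    · right; exact Nat.le_mul_of_pos_right _ (by omega)
  have hsub : e - (4*s+2) + 2*s + 3 = (m+4) + (4*s+6)*j := by omega
  have hdiv2 : (e - (4*s+2) + 2*s + 3) / (4*s+6) = j := by
    rw [hsub, Nat.add_mul_div_left _ _ (by omega : 0 < 4*s+6),
        Nat.div_eq_of_lt (by omega)]
    omega
  unfold chi0
  rw [hk, hdiv2]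
  omega

/-- `chi0` keeps odd values odd and positive. -/
lemma chi0_odd_pos {x : ℕ} (hodd : x % 2 = 1) : chi0 s x % 2 = 1 ∧ 1 ≤ chi0 s x := by
  obtain ⟨k, m, hk, hx, hm⟩ : ∃ k m, (x + 2*s + 3) / (4*s+6) = k ∧
      x + 2*s + 3 = (4*s+6)*k + m ∧ m < 4*s+6 :=
    ⟨_, _, rfl, (Nat.div_add_mod _ _).symm, Nat.mod_lt _ (by omega)⟩
  have h2k : 2*k ≤ x := by
    rcases Nat.eq_zero_or_pos k with h | h
    · omega
    · obtain ⟨j, rfl⟩ : ∃ j, k = j + 1 := ⟨k - 1, by omega⟩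
      have hA : (4*s+6)*(j+1) = (4*s+6)*j + (4*s+6) := by ring
      have hB : (4*s+6)*j = (4*s+4)*j + 2*j := by ring
      omega
  unfold chi0
  rw [hk]
  omega

/-- lower bound for `chi0` on large elements. -/
lemma chi0_big {e : ℕ} (hodd : e % 2 = 1) (h : 4*s+7 ≤ e) : 4*s+5 ≤ chi0 s e := by
  rcases le_or_gt e (6*s+7) with hz | hz
  · rw [chi0_mid s (by omega) hz]; omega
  · have hper := chi0_period s (by omega : 4*s+7 ≤ e)
    have hpos := (chi0_odd_pos (s := s) (x := e - (4*s+6)) (by omega)).2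
    omega

/-- Reverse transfer for `Phi (2s+2)`. -/
lemma reverse_t2 (hs : 1 ≤ s) (g1 : Phi (2*s+1) l) (g2 : Phi (2*s+2) l)
    (g3 : Phi (2*s+3) l) (hodd : ∀ d ∈ l, d % 2 = 1) :
    Phi (2*s+2) (l.map (chi0 s)) := by
  intro x hx
  rw [List.mem_map] at hx
  obtain ⟨e, he, rfl⟩ := hx
  have hoe := hodd e he
  constructor
  · intro hgt
    have he47 : 4*s+7 ≤ e := by
      by_contra hc
      push_neg at hc
      rcases le_or_gt e (2*s+2) with hz | hz
      · rw [chi0_low s hz] at hgt; omega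
      · rw [chi0_mid s hz (by omega)] at hgt; omega
    have hmem2 := (g3 e he).1 (by omega)
    refine List.mem_map.2 ⟨e - (2*(2*s+3)), hmem2, ?_⟩
    have hI := chi0_period s he47
    have h2s : e - 2*(2*s+3) = e - (4*s+6) := by omega
    rw [h2s]
    omega
  · intro hlt hmem
    rw [List.mem_map] at hmem
    obtain ⟨e', he', heq⟩ := hmem
    have hoe' := hodd e' he'
    have hsum : chi0 s e + chi0 s e' = 4*s+4 := by omega
    have hpos := (chi0_odd_pos (s := s) hoe).2
    have hpos' := (chi0_odd_pos (s := s) hoe').2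
    rcases zoneB g1 g2 g3 hodd he with hA | hB | hC
    · rcases zoneB g1 g2 g3 hodd he' with hA' | hB' | hC'
      · rw [chi0_low s (by omega), chi0_low s (by omega)] at hsum
        omega
      · rw [chi0_low s (by omega), chi0_mid s (by omega) (by omega)] at hsum
        have := (g3 e he).2 (by omega)
        have hde : 2*(2*s+3) - e = e' := by omega
        rw [hde] at this
        exact this he'
      · have := chi0_big (s := s) hoe' hC'; omega
    · rcases zoneB g1 g2 g3 hodd he' with hA' | hB' | hC'
      · rw [chi0_mid s (by omega) (by omega), chi0_low s (by omega)] at hsum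
        have := (g3 e' he').2 (by omega)
        have hde : 2*(2*s+3) - e' = e := by omega
        rw [hde] at this
        exact this he
      · rw [chi0_mid s (by omega) (by omega), chi0_mid s (by omega) (by omega)] at hsum
        omega
      · have := chi0_big (s := s) hoe' hC'; omega
    · have := chi0_big (s := s) hoe hC; omega

/-- Reverse transfer for `Phi (2s+1)`. -/
lemma reverse_t1 (hs : 1 ≤ s) (g1 : Phi (2*s+1) l) (g2 : Phi (2*s+2) l)
    (g3 : Phi (2*s+3) l) (hodd : ∀ d ∈ l, d % 2 = 1) :
    Phi (2*s+1) (l.map (chi0 s)) := by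
  intro x hx
  rw [List.mem_map] at hx
  obtain ⟨e, he, rfl⟩ := hx
  have hoe := hodd e he
  constructor
  · intro hgt
    have he45 : 4*s+5 ≤ e := by
      by_contra hc
      push_neg at hc
      rcases le_or_gt e (2*s+2) with hz | hz
      · rw [chi0_low s hz] at hgt; omega
      · rw [chi0_mid s hz (by omega)] at hgt; omega
    have he47 : 4*s+7 ≤ e := by
      have := Y3 g2 g3 0
      have hne : e ≠ 4*s+5 := fun h => this (by simpa [h] using he)
      omega
    have hmem2 := (g2 e he).1 (by omega)
    refine List.mem_map.2 ⟨e - (2*(2*s+2)), hmem2, ?_⟩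
    have hI := chi0_J1 g1 g3 he hoe (by omega)
    have h2s : e - 2*(2*s+2) = e - (4*s+4) := by omega
    rw [h2s]
    omega
  · intro hlt hmem
    rw [List.mem_map] at hmem
    obtain ⟨e', he', heq⟩ := hmem
    have hoe' := hodd e' he'
    have hsum : chi0 s e + chi0 s e' = 4*s+2 := by omega
    have hpos := (chi0_odd_pos (s := s) hoe).2
    have hpos' := (chi0_odd_pos (s := s) hoe').2
    rcases zoneB g1 g2 g3 hodd he with hA | hB | hC
    · rcases zoneB g1 g2 g3 hodd he' with hA' | hB' | hC'
      · rw [chi0_low s (by omega), chi0_low s (by omega)] at hsum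
        omega
      · rw [chi0_low s (by omega), chi0_mid s (by omega) (by omega)] at hsum
        have := (g2 e he).2 (by omega)
        have hde : 2*(2*s+2) - e = e' := by omega
        rw [hde] at this
        exact this he'
      · have := chi0_big (s := s) hoe' hC'; omega
    · rcases zoneB g1 g2 g3 hodd he' with hA' | hB' | hC'
      · rw [chi0_mid s (by omega) (by omega), chi0_low s (by omega)] at hsum
        have := (g2 e' he').2 (by omega)
        have hde : 2*(2*s+2) - e' = e := by omega
        rw [hde] at this
        exact this he
      · rw [chi0_mid s (by omega) (by omega), chi0_mid s (by omega) (by omega)] at hsum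
        omega
      · have := chi0_big (s := s) hoe' hC'; omega
    · have := chi0_big (s := s) hoe hC; omega

/-- Reverse transfer for `Phi (2s)`. -/
lemma reverse_t0 (hs : 1 ≤ s) (g1 : Phi (2*s+1) l) (g2 : Phi (2*s+2) l)
    (g3 : Phi (2*s+3) l) (hodd : ∀ d ∈ l, d % 2 = 1) :
    Phi (2*s) (l.map (chi0 s)) := by
  intro x hx
  rw [List.mem_map] at hx
  obtain ⟨e, he, rfl⟩ := hx
  have hoe := hodd e he
  constructor
  · intro hgt
    have he43 : 4*s+3 ≤ e := by
      by_contra hc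
      push_neg at hc
      rcases le_or_gt e (2*s+2) with hz | hz
      · rw [chi0_low s hz] at hgt; omega
      · rw [chi0_mid s hz (by omega)] at hgt; omega
    have he47 : 4*s+7 ≤ e := by
      have h3 := Y3 g2 g3 0
      have h5 := Y5 g1 g2 g3 0
      have hne : e ≠ 4*s+5 := fun h => h3 (by simpa [h] using he)
      have hne' : e ≠ 4*s+3 := fun h => h5 (by simpa [h] using he)
      omega
    have hmem2 := (g1 e he).1 (by omega)
    refine List.mem_map.2 ⟨e - (2*(2*s+1)), hmem2, ?_⟩
    have hI := chi0_J2 g1 g3 he hoe (by omega)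
    have h2s : e - 2*(2*s+1) = e - (4*s+2) := by omega
    rw [h2s]
    omega
  · intro hlt hmem
    rw [List.mem_map] at hmem
    obtain ⟨e', he', heq⟩ := hmem
    have hoe' := hodd e' he'
    have hsum : chi0 s e + chi0 s e' = 4*s := by omega
    have hpos := (chi0_odd_pos (s := s) hoe).2
    have hpos' := (chi0_odd_pos (s := s) hoe').2
    rcases zoneB g1 g2 g3 hodd he with hA | hB | hC
    · rcases zoneB g1 g2 g3 hodd he' with hA' | hB' | hC'
      · rw [chi0_low s (by omega), chi0_low s (by omega)] at hsum
        omega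
      · rw [chi0_low s (by omega), chi0_mid s (by omega) (by omega)] at hsum
        have := (g1 e he).2 (by omega)
        have hde : 2*(2*s+1) - e = e' := by omega
        rw [hde] at this
        exact this he'
      · have := chi0_big (s := s) hoe' hC'; omega
    · rcases zoneB g1 g2 g3 hodd he' with hA' | hB' | hC'
      · rw [chi0_mid s (by omega) (by omega), chi0_low s (by omega)] at hsum
        have := (g1 e' he').2 (by omega)
        have hde : 2*(2*s+1) - e' = e := by omega
        rw [hde] at this
        exact this he
      · rw [chi0_mid s (by omega) (by omega), chi0_mid s (by omega) (by omega)] at hsum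
        omega
      · have := chi0_big (s := s) hoe' hC'; omega
    · have := chi0_big (s := s) hoe hC; omega

end Reverse

/-- configurations -/
def Cfg (t1 t2 t3 : ℕ) :=
  {l : List ℕ // l.Pairwise (· > ·) ∧ (∀ d ∈ l, d % 2 = 1) ∧ Phi t1 l ∧ Phi t2 l ∧ Phi t3 l}

/-- The key equivalence between the two families of configurations. -/
noncomputable def cfgEquiv (s : ℕ) (hs : 1 ≤ s) :
    Cfg (2*s) (2*s+1) (2*s+2) ≃ Cfg (2*s+1) (2*s+2) (2*s+3) where
  toFun := fun ⟨l, hsort, hodd, h0, h1, h2⟩ =>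
    ⟨l.map (psi0 s),
      by
        rw [List.pairwise_map]
        exact hsort.imp (fun h => psi0_strictMono s h),
      by
        intro d hd
        rw [List.mem_map] at hd
        obtain ⟨d', hd', rfl⟩ := hd
        exact psi0_odd s (hodd d' hd'),
      forward_t1 hs h0 h1 h2 hodd, forward_t2 hs h1 h2 hodd, forward_t3 hs h1 h2 hodd⟩
  invFun := fun ⟨l, hsort, hodd, g1, g2, g3⟩ =>
    ⟨l.map (chi0 s),
      by
        rw [List.pairwise_map]
        refine List.Pairwise.imp_of_mem ?_ hsort
        intro a b ha hb hab
        by_contra hc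
        push_neg at hc
        have := psi0_mono s hc
        rw [psi0_chi0 g1 g3 hb (hodd b hb), psi0_chi0 g1 g3 ha (hodd a ha)] at this
        omega,
      by
        intro d hd
        rw [List.mem_map] at hd
        obtain ⟨e, he, rfl⟩ := hd
        exact (chi0_odd_pos (hodd e he)).1,
      reverse_t0 hs g1 g2 g3 hodd, reverse_t1 hs g1 g2 g3 hodd,
      reverse_t2 hs g1 g2 g3 hodd⟩
  left_inv := fun ⟨l, hsort, hodd, h0, h1, h2⟩ => by
    apply Subtype.ext
    simp only [List.map_map]
    calc l.map (chi0 s ∘ psi0 s) = l.map id := by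
          apply List.map_congr_left
          intro a _
          exact chi0_psi0 s a
      _ = l := List.map_id l
  right_inv := fun ⟨l, hsort, hodd, g1, g2, g3⟩ => by
    apply Subtype.ext
    simp only [List.map_map]
    calc l.map (psi0 s ∘ chi0 s) = l.map id := by
          apply List.map_congr_left
          intro a ha
          exact psi0_chi0 g1 g3 ha (hodd a ha)
      _ = l := List.map_id l

/- ===================== Part 2 : building a self-conjugate partition ===================== -/

section Build

variable (l : List ℕ)

def dd (i : ℕ) : ℕ := l.getD i 0
def top (i : ℕ) : ℕ := i + (dd l i + 1)/2
def cnt (j : ℕ) : ℕ := ((Finset.range l.length).filter (fun m => j < top l m)).card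
def bparts (i : ℕ) : ℕ := if i < l.length then top l i else cnt l i

variable {l}
variable (hsort : l.Pairwise (· > ·)) (hodd : ∀ d ∈ l, d % 2 = 1)

lemma dd_mem {i : ℕ} (h : i < l.length) : dd l i ∈ l := by
  rw [dd, List.getD_eq_getElem l 0 h]
  exact List.getElem_mem h

include hodd in
lemma dd_odd {i : ℕ} (h : i < l.length) : dd l i % 2 = 1 := hodd _ (dd_mem h)

include hsort in
lemma dd_lt {i j : ℕ} (hij : i < j) (h : j < l.length) : dd l j < dd l i := by
  rw [dd, dd, List.getD_eq_getElem l 0 h, List.getD_eq_getElem l 0 (lt_trans hij h)]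
  exact List.pairwise_iff_getElem.1 hsort i j (lt_trans hij h) h hij

include hsort hodd in
lemma dd_chain : ∀ k i, i + k < l.length → dd l (i+k) + 2*k ≤ dd l i := by
  intro k
  induction k with
  | zero => intro i h; simp
  | succ n ih =>
    intro i h
    have h1 := dd_lt hsort (by omega : i+n < i+n+1) (by omega : i+n+1 < l.length)
    have h2 := ih i (by omega)
    have h3 := dd_odd hodd (by omega : i+n < l.length)
    have h4 := dd_odd hodd (by omega : i+n+1 < l.length)
    have he : i + (n+1) = i + n + 1 := by omega
    rw [he]
    omega

include hodd in
lemma dd_pos {i : ℕ} (h : i < l.length) : 1 ≤ dd l i := by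
  have := dd_odd hodd h; omega

include hodd in
lemma top_ge {i : ℕ} (h : i < l.length) : i + 1 ≤ top l i := by
  have := dd_pos hodd h; rw [top]; omega

include hsort hodd in
lemma top_anti {i j : ℕ} (hij : i ≤ j) (h : j < l.length) : top l j ≤ top l i := by
  obtain ⟨k, rfl⟩ : ∃ k, j = i + k := ⟨j - i, by omega⟩
  have h1 := dd_chain hsort hodd k i h
  have h2 := dd_odd hodd h
  have h3 := dd_odd hodd (by omega : i < l.length)
  rw [top, top]
  omega

include hsort hodd in
lemma top_ge_r {i : ℕ} (h : i < l.length) : l.length ≤ top l i := by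
  have h1 := dd_chain hsort hodd (l.length - 1 - i) i (by omega)
  have h2 := dd_pos hodd (by omega : l.length - 1 < l.length)
  have h3 : i + (l.length - 1 - i) = l.length - 1 := by omega
  rw [h3] at h1
  have h4 := dd_odd hodd (by omega : i < l.length)
  rw [top]
  omega

lemma cnt_le (j : ℕ) : cnt l j ≤ l.length := by
  rw [cnt]
  calc ((Finset.range l.length).filter _).card ≤ (Finset.range l.length).card :=
        Finset.card_filter_le _ _
    _ = l.length := Finset.card_range _

include hsort hodd in
lemma cnt_char {m j : ℕ} (hm : m < l.length) : m < cnt l j ↔ j < top l m := by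
  classical
  set S := (Finset.range l.length).filter (fun m => j < top l m) with hS
  have hdc : S = Finset.range S.card := by
    apply Finset.eq_of_subset_of_card_le
    · intro x hx
      rw [hS, Finset.mem_filter, Finset.mem_range] at hx
      rw [Finset.mem_range]
      have hsub : Finset.range (x+1) ⊆ S := by
        intro y hy
        rw [Finset.mem_range] at hy
        rw [hS, Finset.mem_filter, Finset.mem_range]
        refine ⟨by omega, ?_⟩
        calc j < top l x := hx.2
          _ ≤ top l y := top_anti hsort hodd (by omega) hx.1
      have := Finset.card_le_card hsub
      rw [Finset.card_range] at this
      omega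
    · rw [Finset.card_range]
  constructor
  · intro h
    have : m ∈ Finset.range S.card := Finset.mem_range.2 h
    rw [← hdc, hS, Finset.mem_filter] at this
    exact this.2
  · intro h
    have : m ∈ S := by
      rw [hS, Finset.mem_filter, Finset.mem_range]
      exact ⟨hm, h⟩
    rw [hdc, Finset.mem_range] at this
    exact this

lemma bparts_lt {i : ℕ} (h : i < l.length) : bparts l i = top l i := if_pos h
lemma bparts_ge {i : ℕ} (h : l.length ≤ i) : bparts l i = cnt l i := if_neg (by omega)

include hsort hodd in
lemma bparts_anti : ∀ ⦃i j : ℕ⦄, i ≤ j → bparts l j ≤ bparts l i := by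
  intro i j hij
  rcases lt_or_ge j l.length with hj | hj
  · rw [bparts_lt hj, bparts_lt (by omega)]
    exact top_anti hsort hodd hij hj
  · rcases lt_or_ge i l.length with hi | hi
    · rw [bparts_ge hj, bparts_lt hi]
      calc cnt l j ≤ l.length := cnt_le j
        _ ≤ top l i := top_ge_r hsort hodd hi
    · rw [bparts_ge hj, bparts_ge hi]
      apply Finset.card_le_card
      intro x hx
      rw [Finset.mem_filter] at hx ⊢
      exact ⟨hx.1, by omega⟩

include hsort hodd in
lemma bparts_support : ∀ i, l.length + top l 0 ≤ i → bparts l i = 0 := by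
  intro i hi
  rcases Nat.eq_zero_or_pos l.length with hr | hr
  · rw [bparts_ge (by omega), cnt, hr]
    simp
  · rw [bparts_ge (by omega), cnt, Finset.card_eq_zero, Finset.filter_eq_empty_iff]
    intro m hm
    rw [Finset.mem_range] at hm
    have := top_anti hsort hodd (Nat.zero_le m) hm
    omega

/-- The self-conjugate partition attached to a strictly decreasing list of odd
diagonal hook lengths. -/
def build : YPartition where
  parts := bparts l
  antitone := bparts_anti hsort hodd
  support_finite := ⟨l.length + top l 0, bparts_support hsort hodd⟩

lemma build_parts : (build hsort hodd).parts = bparts l := rfl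

end Build

section BuildProps

variable {l : List ℕ} (hsort : l.Pairwise (· > ·)) (hodd : ∀ d ∈ l, d % 2 = 1)

include hsort hodd

lemma conj_build (j : ℕ) : (build hsort hodd).conj j = bparts l j := by
  rcases lt_or_ge j l.length with hj | hj
  · rw [bparts_lt hj]
    apply YPartition.conj_eq_of
    · intro i hi
      show j < bparts l i
      rcases lt_or_ge i l.length with hir | hir
      · rw [bparts_lt hir]
        rcases le_or_gt i j with hij | hij
        · have h1 := top_ge hodd hj
          have h2 := top_anti hsort hodd hij hj
          omega
        · have := top_ge hodd hir
          omega
      · rw [bparts_ge hir]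
        exact (cnt_char hsort hodd hj).2 hi
    · show bparts l (top l j) ≤ j
      have hge : l.length ≤ top l j := top_ge_r hsort hodd hj
      rw [bparts_ge hge]
      by_contra h
      push_neg at h
      have := (cnt_char hsort hodd hj).1 h
      omega
  · rw [bparts_ge hj]
    apply YPartition.conj_eq_of
    · intro i hi
      show j < bparts l i
      have hir : i < l.length := lt_of_lt_of_le hi (cnt_le j)
      rw [bparts_lt hir]
      exact (cnt_char hsort hodd hir).1 hi
    · show bparts l (cnt l j) ≤ j
      rcases lt_or_ge (cnt l j) l.length with hc | hc
      · rw [bparts_lt hc]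
        by_contra h
        push_neg at h
        have := (cnt_char hsort hodd hc).2 h
        omega
      · rw [bparts_ge hc]
        have := cnt_le (l := l) (cnt l j)
        omega

lemma selfconj_build : (build hsort hodd).IsSelfConjugate := by
  intro j
  rw [conj_build]
  rfl

lemma box_symm {i j : ℕ} (h : j < bparts l i) : i < bparts l j := by
  have h' : j < (build hsort hodd).parts i := h
  have := (YPartition.lt_conj_iff (p := build hsort hodd) (i := i) (j := j)).2 h'
  rwa [conj_build] at this

lemma hook_eq {i j : ℕ} (h : j < bparts l i) :
    (build hsort hodd).hook i j = bparts l i + bparts l j - i - j - 1 ∧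
      i + j + 2 ≤ bparts l i + bparts l j := by
  have h2 : i < bparts l j := box_symm hsort hodd h
  constructor
  · show (build hsort hodd).parts i + (build hsort hodd).conj j - i - j - 1 = _
    rw [conj_build]
    rfl
  · omega

lemma gap_not_mem {j : ℕ} (hj : l.length ≤ j) : 2*(j - cnt l j) + 1 ∉ l := by
  intro hmem
  obtain ⟨m, hm, hme⟩ := List.mem_iff_getElem.1 hmem
  have hdd : dd l m = 2*(j - cnt l j) + 1 := by
    rw [dd, List.getD_eq_getElem l 0 hm]; exact hme
  have hc := cnt_le (l := l) j
  have htopm : top l m = m + (j - cnt l j + 1) := by rw [top, hdd]; omega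
  rcases lt_or_ge m (cnt l j) with hmc | hmc
  · have htop := (cnt_char hsort hodd hm).1 hmc
    omega
  · have htop : ¬ (j < top l m) := fun hlt => by
      have := (cnt_char hsort hodd hm).2 hlt; omega
    omega

/-- classification of hook lengths in row `i` -/
lemma hook_in_W {i j : ℕ} (hi : i < l.length) (hb : j < bparts l i) :
    (∃ m < l.length, 2*((build hsort hodd).hook i j) = dd l i + dd l m) ∨
    (∃ e, e % 2 = 1 ∧ e ∉ l ∧ 2*((build hsort hodd).hook i j) + e = dd l i) := by
  obtain ⟨hhe, hge⟩ := hook_eq hsort hodd hb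
  have hoi := dd_odd hodd hi
  rcases lt_or_ge j l.length with hj | hj
  · left
    refine ⟨j, hj, ?_⟩
    have hoj := dd_odd hodd hj
    rw [hhe, bparts_lt hi, bparts_lt hj]
    rw [bparts_lt hi] at hb
    simp only [top] at hb ⊢
    omega
  · right
    have hcnt : j < top l i := by rwa [bparts_lt hi] at hb
    have hic : i < cnt l j := (cnt_char hsort hodd hi).2 hcnt
    have hcle : cnt l j ≤ l.length := cnt_le j
    refine ⟨2*(j - cnt l j) + 1, by omega, gap_not_mem hsort hodd hj, ?_⟩
    rw [hhe, bparts_lt hi, bparts_ge hj]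
    rw [bparts_lt hi, top] at hb
    rw [top]
    omega

lemma realize_sum {i m : ℕ} (hi : i < l.length) (hm : m < l.length) :
    ∃ j, j < bparts l i ∧ 2*((build hsort hodd).hook i j) = dd l i + dd l m := by
  refine ⟨m, ?_, ?_⟩
  · rw [bparts_lt hi]
    exact lt_of_lt_of_le hm (top_ge_r hsort hodd hi)
  · have hb : m < bparts l i := by
      rw [bparts_lt hi]
      exact lt_of_lt_of_le hm (top_ge_r hsort hodd hi)
    obtain ⟨hhe, hge⟩ := hook_eq hsort hodd hb
    have hoi := dd_odd hodd hi
    have hom := dd_odd hodd hm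
    rw [hhe, bparts_lt hi, bparts_lt hm, top, top]
    omega

lemma realize_diff {i e : ℕ} (hi : i < l.length) (he : e % 2 = 1) (hne : e ∉ l)
    (helt : e < dd l i) :
    ∃ j, j < bparts l i ∧ 2*((build hsort hodd).hook i j) + e = dd l i := by
  classical
  set c := ((Finset.range l.length).filter (fun m => e < dd l m)).card with hc
  have hoi := dd_odd hodd hi
  -- characterisation of c
  have hchar : ∀ m, m < l.length → (m < c ↔ e < dd l m) := by
    intro m hm
    have hdc : (Finset.range l.length).filter (fun m => e < dd l m) =
        Finset.range c := by
      apply Finset.eq_of_subset_of_card_le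
      · intro x hx
        rw [Finset.mem_filter, Finset.mem_range] at hx
        rw [Finset.mem_range]
        have hsub : Finset.range (x+1) ⊆
            (Finset.range l.length).filter (fun m => e < dd l m) := by
          intro y hy
          rw [Finset.mem_range] at hy
          rw [Finset.mem_filter, Finset.mem_range]
          refine ⟨by omega, ?_⟩
          obtain ⟨k, rfl⟩ : ∃ k, x = y + k := ⟨x - y, by omega⟩
          have := dd_chain hsort hodd k y hx.1
          omega
        have := Finset.card_le_card hsub
        rw [Finset.card_range] at this
        omega
      · rw [Finset.card_range]
    constructor
    · intro h
      have : m ∈ Finset.range c := Finset.mem_range.2 h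
      rw [← hdc, Finset.mem_filter] at this
      exact this.2
    · intro h
      have : m ∈ (Finset.range l.length).filter (fun m => e < dd l m) := by
        rw [Finset.mem_filter, Finset.mem_range]
        exact ⟨hm, h⟩
      rw [hdc, Finset.mem_range] at this
      exact this
  have hcr : c ≤ l.length := by
    rw [hc]
    calc ((Finset.range l.length).filter _).card ≤ (Finset.range l.length).card :=
          Finset.card_filter_le _ _
      _ = l.length := Finset.card_range _
  have hic : i < c := (hchar i hi).2 helt
  set j := c + (e-1)/2 with hj
  -- j ≥ r
  have hjr : l.length ≤ j := by
    rcases lt_or_ge c l.length with hcl | hcl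
    · have hddc : dd l c ≤ e := by
        by_contra hcon
        push_neg at hcon
        exact absurd ((hchar c hcl).2 hcon) (by omega)
      have hddne : dd l c ≠ e := fun h => hne (h ▸ dd_mem hcl)
      have hoc := dd_odd hodd hcl
      have := top_ge_r hsort hodd hcl
      rw [top] at this
      omega
    · omega
  -- cnt l j = c
  have hcntj : cnt l j = c := by
    have hle1 : c ≤ cnt l j := by
      by_contra hcon
      push_neg at hcon
      set m := cnt l j with hm
      have hmr : m < l.length := by omega
      have hlt1 : e < dd l m := (hchar m hmr).1 hcon
      have hnotlt : ¬ (j < top l m) := fun hlt => by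
        have := (cnt_char hsort hodd hmr).2 hlt
        omega
      -- chain from m to c-1
      have hch := dd_chain hsort hodd (c - 1 - m) m (by omega)
      have hlt2 : e < dd l (c-1) := (hchar (c-1) (by omega)).1 (by omega)
      have ho1 := dd_odd hodd (by omega : c - 1 < l.length)
      have hom := dd_odd hodd hmr
      have hm1 : m + (c - 1 - m) = c - 1 := by omega
      rw [hm1] at hch
      rw [top] at hnotlt
      omega
    have hle2 : cnt l j ≤ c := by
      by_contra hcon
      push_neg at hcon
      have hcl : c < l.length := lt_of_lt_of_le hcon (cnt_le j)
      have := (cnt_char hsort hodd hcl).1 hcon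
      have hddc : dd l c ≤ e := by
        by_contra hcon2
        push_neg at hcon2
        exact absurd ((hchar c hcl).2 hcon2) (by omega)
      have hddne : dd l c ≠ e := fun h => hne (h ▸ dd_mem hcl)
      have hoc := dd_odd hodd hcl
      rw [top] at this
      omega
    omega
  -- j < top l i
  have hcb : c ≤ i + (dd l i - e)/2 := by
    rcases lt_or_ge (i + (dd l i - e)/2) l.length with hgr | hgr
    · by_contra hcon
      push_neg at hcon
      have := (hchar _ hgr).1 hcon
      have hch := dd_chain hsort hodd ((dd l i - e)/2) i hgr
      omega
    · omega
  have hjb : j < top l i := by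
    rw [top]
    omega
  have hbox : j < bparts l i := by rwa [bparts_lt hi]
  refine ⟨j, hbox, ?_⟩
  obtain ⟨hhe, hge⟩ := hook_eq hsort hodd hbox
  rw [hhe, bparts_lt hi, bparts_ge hjr, hcntj]
  simp only [top] at hjb ⊢
  omega

end BuildProps

/- ===================== Part 3 : the dictionary ===================== -/

section CoreIff

variable {l : List ℕ} {t : ℕ}

lemma L_sum (hphi : Phi t l) (hodd : ∀ d ∈ l, d % 2 = 1) (ht : 0 < t) :
    ∀ k d d', d ∈ l → d' ∈ l → d + d' = 2*k*t → False := by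
  intro k
  induction k with
  | zero =>
    intro d d' hd hd' hsum
    have := hodd d hd
    omega
  | succ k ih =>
    intro d d' hd hd' hsum
    have hK : 2*(k+1)*t = 2*k*t + 2*t := by ring
    have hkt : k = 0 ∨ 2*t ≤ 2*k*t := by
      rcases Nat.eq_zero_or_pos k with h | h
      · exact Or.inl h
      · right
        calc 2*t = 2*1*t := by ring
          _ ≤ 2*k*t := Nat.mul_le_mul_right t (by omega)
    have hd2 : d ≠ 2*t := fun h => by have := hodd d hd; omega
    have hd'2 : d' ≠ 2*t := fun h => by have := hodd d' hd'; omega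
    rcases lt_or_ge (2*t) d with hgt | hle
    · have hmem := (hphi d hd).1 hgt
      exact ih (d - 2*t) d' hmem hd' (by omega)
    · rcases lt_or_ge (2*t) d' with hgt' | hle'
      · have hmem := (hphi d' hd').1 hgt'
        exact ih d (d' - 2*t) hd hmem (by omega)
      · rcases hkt with h0 | hbig
        · subst h0
          have hlt : d < 2*t := by omega
          have hthis := (hphi d hd).2 hlt
          have hde : 2*t - d = d' := by omega
          rw [hde] at hthis
          exact hthis hd'
        · have := hodd d hd
          have := hodd d' hd'
          omega

lemma L_diff (hphi : Phi t l) (ht : 0 < t) :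
    ∀ k d e, d ∈ l → e ∉ l → e % 2 = 1 → d = e + 2*(k+1)*t → False := by
  intro k
  induction k with
  | zero =>
    intro d e hd hne hoe hsum
    have hmem := (hphi d hd).1 (by omega)
    have hde : d - 2*t = e := by omega
    rw [hde] at hmem
    exact hne hmem
  | succ k ih =>
    intro d e hd hne hoe hsum
    have hK : 2*(k+1+1)*t = 2*(k+1)*t + 2*t := by ring
    have hkt : 2*t ≤ 2*(k+1)*t := by
      calc 2*t = 2*1*t := by ring
        _ ≤ 2*(k+1)*t := Nat.mul_le_mul_right t (by omega)
    have hmem := (hphi d hd).1 (by omega)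
    exact ih (d - 2*t) e hmem hne hoe (by omega)

variable (hsort : l.Pairwise (· > ·)) (hodd : ∀ d ∈ l, d % 2 = 1)

include hsort hodd in
lemma isCore_build_iff (ht : 0 < t) :
    (build hsort hodd).IsCore t ↔ Phi t l := by
  constructor
  · intro hcore d hd
    obtain ⟨i, hi, hie⟩ := List.mem_iff_getElem.1 hd
    have hddi : dd l i = d := by rw [dd, List.getD_eq_getElem l 0 hi]; exact hie
    have hod := hodd d hd
    constructor
    · intro hgt
      by_contra hne
      obtain ⟨j, hj, hhook⟩ := realize_diff hsort hodd hi
        (e := d - 2*t) (by omega) (by exact hne) (by omega)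
      have hht : (build hsort hodd).hook i j = t := by omega
      exact hcore i j hj (hht ▸ dvd_refl t)
    · intro hlt hmem
      obtain ⟨m, hm, hme⟩ := List.mem_iff_getElem.1 hmem
      have hddm : dd l m = 2*t - d := by
        rw [dd, List.getD_eq_getElem l 0 hm]; exact hme
      obtain ⟨j, hj, hhook⟩ := realize_sum hsort hodd hi hm
      have hht : (build hsort hodd).hook i j = t := by omega
      exact hcore i j hj (hht ▸ dvd_refl t)
  · intro hphi
    have key : ∀ i j, i < l.length → j < bparts l i →
        ¬ t ∣ (build hsort hodd).hook i j := by
      intro i j hi hb hdvd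
      obtain ⟨hhe, hge⟩ := hook_eq hsort hodd hb
      have hpos : 1 ≤ (build hsort hodd).hook i j := by omega
      obtain ⟨k, hk⟩ := hdvd
      have hk1 : 1 ≤ k := by
        rcases Nat.eq_zero_or_pos k with h0 | h1
        · subst h0; simp at hk; omega
        · exact h1
      rcases hook_in_W hsort hodd hi hb with ⟨m, hm, hsum⟩ | ⟨e, hoe, hne, hdiff⟩
      · have heq : dd l i + dd l m = 2*k*t := by
          have : 2*(t*k) = 2*k*t := by ring
          omega
        exact L_sum hphi hodd ht k _ _ (dd_mem hi) (dd_mem hm) heq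
      · obtain ⟨k', rfl⟩ : ∃ k', k = k' + 1 := ⟨k-1, by omega⟩
        have heq : dd l i = e + 2*(k'+1)*t := by
          have : 2*(t*(k'+1)) = 2*(k'+1)*t := by ring
          omega
        exact L_diff hphi ht k' _ _ (dd_mem hi) hne hoe heq
    intro i j hb
    rcases lt_or_ge i l.length with hi | hi
    · exact key i j hi hb
    · have hb' : j < bparts l i := hb
      have hjr : j < l.length := by
        have h1 : bparts l i ≤ l.length := by
          rw [bparts_ge hi]; exact cnt_le i
        omega
      have hib : i < bparts l j := box_symm hsort hodd hb'
      intro hdvd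
      refine key j i hjr hib ?_
      obtain ⟨h1, h1'⟩ := hook_eq hsort hodd hb'
      obtain ⟨h2, h2'⟩ := hook_eq hsort hodd hib
      have heq : (build hsort hodd).hook j i = (build hsort hodd).hook i j := by
        omega
      rwa [heq]

end CoreIff

section Dict

lemma durfeeEx (p : YPartition) : ∃ i, p.parts i ≤ i := by
  obtain ⟨N, hN⟩ := p.support_finite
  exact ⟨N, by simp [hN N le_rfl]⟩

noncomputable def durfee (p : YPartition) : ℕ := Nat.find (durfeeEx p)

lemma durfee_spec (p : YPartition) : p.parts (durfee p) ≤ durfee p := by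
  simpa [durfee] using Nat.find_spec (durfeeEx p)

lemma lt_durfee {p : YPartition} {i : ℕ} : i < durfee p ↔ i < p.parts i := by
  constructor
  · intro h
    have := Nat.find_min (durfeeEx p) (by simpa [durfee] using h)
    omega
  · intro h
    by_contra hc
    push_neg at hc
    have h2 := p.antitone hc
    have h3 := durfee_spec p
    omega

noncomputable def DD (p : YPartition) : List ℕ :=
  (List.range (durfee p)).map (fun i => 2*(p.parts i - i) - 1)

lemma DD_length (p : YPartition) : (DD p).length = durfee p := by simp [DD]

lemma DD_get {p : YPartition} {i : ℕ} (h : i < durfee p) :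
    dd (DD p) i = 2*(p.parts i - i) - 1 := by
  rw [dd, DD]
  rw [List.getD_eq_getElem _ 0 (by simpa using h)]
  simp

lemma DD_sorted (p : YPartition) : (DD p).Pairwise (· > ·) := by
  rw [DD, List.pairwise_map]
  have hpw : (List.range (durfee p)).Pairwise (· < ·) := List.pairwise_lt_range
  refine hpw.imp_of_mem ?_
  intro a b ha hb hab
  rw [List.mem_range] at ha hb
  have hpa : a < p.parts a := lt_durfee.1 ha
  have hpb : b < p.parts b := lt_durfee.1 hb
  have := p.antitone (le_of_lt hab)
  simp only [gt_iff_lt]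
  omega

lemma DD_odd (p : YPartition) : ∀ d ∈ DD p, d % 2 = 1 := by
  intro d hd
  rw [DD, List.mem_map] at hd
  obtain ⟨i, hi, rfl⟩ := hd
  rw [List.mem_range] at hi
  have := lt_durfee.1 hi
  omega

lemma top_DD {p : YPartition} {m : ℕ} (hm : m < durfee p) :
    top (DD p) m = p.parts m := by
  rw [top, DD_get hm]
  have := lt_durfee.1 hm
  omega

lemma build_DD (p : YPartition) (hsc : p.IsSelfConjugate) :
    build (DD_sorted p) (DD_odd p) = p := by
  apply YPartition.ext'
  funext i
  show bparts (DD p) i = p.parts i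
  have hr : (DD p).length = durfee p := DD_length p
  rcases lt_or_ge i (durfee p) with hi | hi
  · rw [bparts_lt (by omega)]
    exact top_DD hi
  · rw [bparts_ge (by omega)]
    have hcle : cnt (DD p) i ≤ durfee p := by
      rw [← hr]; exact cnt_le i
    have hconj : p.conj i = cnt (DD p) i := by
      apply YPartition.conj_eq_of
      · intro m hm
        have hmr : m < durfee p := lt_of_lt_of_le hm hcle
        have hlt := (cnt_char (DD_sorted p) (DD_odd p) (by omega)).1 hm
        rwa [top_DD hmr] at hlt
      · rcases lt_or_ge (cnt (DD p) i) (durfee p) with hc | hc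
        · by_contra hcon
          push_neg at hcon
          have h2 : i < top (DD p) (cnt (DD p) i) := by
            rwa [top_DD hc]
          have := (cnt_char (DD_sorted p) (DD_odd p) (by omega)).2 h2
          omega
        · have h2 : cnt (DD p) i = durfee p := le_antisymm hcle hc
          rw [h2]
          have h3 := durfee_spec p
          omega
    rw [← hsc i, hconj]

lemma DD_build {l : List ℕ} (hsort : l.Pairwise (· > ·)) (hodd : ∀ d ∈ l, d % 2 = 1) :
    DD (build hsort hodd) = l := by
  have hb : ∀ i, (build hsort hodd).parts i = bparts l i := fun _ => rfl
  have hdur : durfee (build hsort hodd) = l.length := by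
    apply le_antisymm
    · have hle : (build hsort hodd).parts l.length ≤ l.length := by
        rw [hb, bparts_ge le_rfl]
        exact cnt_le _
      exact Nat.find_le hle
    · by_contra h
      push_neg at h
      have h1 := durfee_spec (build hsort hodd)
      rw [hb, bparts_lt h] at h1
      have := top_ge hodd h
      omega
  apply List.ext_getElem
  · rw [DD_length, hdur]
  · intro i h1 h2
    have hidur : i < durfee (build hsort hodd) := by
      rw [DD_length] at h1; exact h1
    have hir : i < l.length := by rwa [hdur] at hidur
    have hget : (DD (build hsort hodd))[i] = dd (DD (build hsort hodd)) i := by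
      rw [dd, List.getD_eq_getElem _ 0 h1]
    rw [hget, DD_get hidur, hb, bparts_lt hir]
    have hoi := dd_odd hodd hir
    have hgl : l[i] = dd l i := by rw [dd, List.getD_eq_getElem l 0 hir]
    rw [hgl, top]
    omega

/-- The dictionary between self-conjugate simultaneous core partitions and
their configurations of diagonal hook lengths. -/
noncomputable def partCfgEquiv (t1 t2 t3 : ℕ) (h1 : 0 < t1) (h2 : 0 < t2) (h3 : 0 < t3) :
    {p : YPartition // p.IsSelfConjugate ∧ p.IsCore t1 ∧ p.IsCore t2 ∧ p.IsCore t3} ≃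
      Cfg t1 t2 t3 where
  toFun := fun ⟨p, hsc, hc1, hc2, hc3⟩ =>
    ⟨DD p, DD_sorted p, DD_odd p,
      (isCore_build_iff (DD_sorted p) (DD_odd p) h1).1 (by rw [build_DD p hsc]; exact hc1),
      (isCore_build_iff (DD_sorted p) (DD_odd p) h2).1 (by rw [build_DD p hsc]; exact hc2),
      (isCore_build_iff (DD_sorted p) (DD_odd p) h3).1 (by rw [build_DD p hsc]; exact hc3)⟩
  invFun := fun ⟨l, hsort, hodd, p1, p2, p3⟩ =>
    ⟨build hsort hodd, selfconj_build hsort hodd,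
      (isCore_build_iff hsort hodd h1).2 p1,
      (isCore_build_iff hsort hodd h2).2 p2,
      (isCore_build_iff hsort hodd h3).2 p3⟩
  left_inv := fun ⟨p, hsc, _, _, _⟩ => Subtype.ext (build_DD p hsc)
  right_inv := fun ⟨l, hsort, hodd, _, _, _⟩ => Subtype.ext (DD_build hsort hodd)

end Dict

end SCCore

/-- For every positive integer `s`, the number of self-conjugate
`(2s, 2s+1, 2s+2)`-core partitions equals the number of self-conjugate
`(2s+1, 2s+2, 2s+3)`-core partitions. -/
theorem count_selfConjugate_even_eq_odd (s : ℕ) (hs : 0 < s) :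
    Nat.card {p : YPartition // p.IsSelfConjugate ∧
        p.IsCore (2 * s) ∧ p.IsCore (2 * s + 1) ∧ p.IsCore (2 * s + 2)} =
      Nat.card {p : YPartition // p.IsSelfConjugate ∧
        p.IsCore (2 * s + 1) ∧ p.IsCore (2 * s + 2) ∧ p.IsCore (2 * s + 3)} := by
  refine Nat.card_congr ?_
  exact ((SCCore.partCfgEquiv (2*s) (2*s+1) (2*s+2) (by omega) (by omega) (by omega)).trans
    (SCCore.cfgEquiv s hs)).trans
    (SCCore.partCfgEquiv (2*s+1) (2*s+2) (2*s+3) (by omega) (by omega) (by omega)).symm
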